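/- arXiv:2509.06614 — 3 statements merged into one kernel-verified Lean document; each statement's English description precedes it below -/
import Mathlib

section
/- Assume the leaf-hash h : α → β is injective and the node combiner H : β → β → β is injective as a function on pairs. If π verifies element e at position i against root r, and π' verifies element e' at the same position i against the same root r, then e = e' and π = π'. (Uniqueness of Merkle membership proofs: for a fixed root and position there is at most one verifying element and proof.) -/
variable {α β : Type*}

/-- Verification fold of a membership proof `π` (a vector of `d` hashes) for element `e`
at position `i`: `v 0 = h e`, and `v (k+1) = H (π k) (v k)` if the `k`-th bit of `i` is 1,
else `v (k+1) = H (v k) (π k)`. -/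
def vfold (h : α → β) (H : β → β → β) (e : α) (i : ℕ) {d : ℕ} (π : Fin d → β) : ℕ → β
  | 0 => h e
  | k + 1 =>
    if hk : k < d then
      if i.testBit k then H (π ⟨k, hk⟩) (vfold h H e i π k)
      else H (vfold h H e i π k) (π ⟨k, hk⟩)
    else vfold h H e i π k

/-- The membership proof `π` verifies element `e` at position `i` against root `r`. -/
def Verifies (h : α → β) (H : β → β → β) {d : ℕ} (π : Fin d → β) (e : α)
    (i : Fin (2 ^ d)) (r : β) : Prop :=
  vfold h H e i.val π d = r


/-!
Verification can be run backwards: injectivity of `H` on pairs recovers, from each level of the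
fold, both the sibling hash and the value one level down, and at the leaf injectivity of `h`
recovers the element.
-/

theorem vfold_succ_of_lt (h : α → β) (H : β → β → β) (e : α) (i : ℕ) {d : ℕ} (π : Fin d → β)
    {k : ℕ} (hk : k < d) :
    vfold h H e i π (k + 1) =
      if i.testBit k then H (π ⟨k, hk⟩) (vfold h H e i π k)
      else H (vfold h H e i π k) (π ⟨k, hk⟩) := by
  rw [vfold, dif_pos hk]

theorem eq_and_forall_eq_of_vfold_eq {h : α → β} {H : β → β → β}
    (hh : Function.Injective h) (hH : Function.Injective2 H)
    {e e' : α} {i : ℕ} {d : ℕ} {π π' : Fin d → β} {k : ℕ} (hk : k ≤ d)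
    (hv : vfold h H e i π k = vfold h H e' i π' k) :
    e = e' ∧ ∀ j : Fin d, (j : ℕ) < k → π j = π' j := by
  induction k with
  | zero => exact ⟨hh hv, fun j hj => absurd hj (Nat.not_lt_zero _)⟩
  | succ k ih =>
    rw [vfold_succ_of_lt h H e i π hk, vfold_succ_of_lt h H e' i π' hk] at hv
    obtain ⟨hπk, hvk⟩ : π ⟨k, hk⟩ = π' ⟨k, hk⟩ ∧ vfold h H e i π k = vfold h H e' i π' k := by
      split_ifs at hv
      exacts [hH hv, (hH hv).symm]
    obtain ⟨he, hπ⟩ := ih (Nat.le_of_succ_le hk) hvk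
    refine ⟨he, fun j hj => ?_⟩
    rcases Nat.lt_succ_iff_lt_or_eq.mp hj with hjk | rfl
    · exact hπ j hjk
    · exact hπk

/-- Uniqueness of Merkle membership proofs: for injective `h` and `H`, a fixed root and
position admit at most one verifying element and proof. -/
theorem membership_unique (h : α → β) (H : β → β → β)
    (hinj : Function.Injective h)
    (Hinj : Function.Injective fun p : β × β => H p.1 p.2)
    {d : ℕ} (π π' : Fin d → β) (e e' : α) (i : Fin (2 ^ d)) (r : β)
    (h1 : Verifies h H π e i r) (h2 : Verifies h H π' e' i r) :
    e = e' ∧ π = π' := by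
  have hH : Function.Injective2 H := fun a₁ a₂ b₁ b₂ hab =>
    Prod.ext_iff.mp (@Hinj (a₁, b₁) (a₂, b₂) hab)
  obtain ⟨he, hπ⟩ := eq_and_forall_eq_of_vfold_eq hinj hH le_rfl (h1.trans h2.symm)
  exact ⟨he, funext fun j => hπ j j.isLt⟩
end

section
/- For all k ≤ d, the verification fold of the canonical sibling-path proof for leaf i : Fin (2^d) with element ℓ i, computed for k steps, equals the Merkle root mroot k of the 2^k-block of leaves containing i, i.e., of the leaves with indices ⌊i/2^k⌋·2^k, ⌊i/2^k⌋·2^k + 1, …, ⌊i/2^k⌋·2^k + 2^k − 1. (The structural invariant behind the honest prover's strategy in the multi-step membership fraud-proof: every node on the path from leaf i to the root is the Merkle root of the block of leaves below it.) -/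
variable {α β : Type*}

/-- First half of a family of `2^(d+1)` leaves. -/
def half0 {d : ℕ} (ℓ : Fin (2 ^ (d + 1)) → α) : Fin (2 ^ d) → α :=
  fun i => ℓ ⟨i.val, by
    have hi := i.isLt
    have h2 : 2 ^ (d + 1) = 2 ^ d + 2 ^ d := by rw [pow_succ]; ring
    omega⟩

/-- Second half of a family of `2^(d+1)` leaves. -/
def half1 {d : ℕ} (ℓ : Fin (2 ^ (d + 1)) → α) : Fin (2 ^ d) → α :=
  fun i => ℓ ⟨2 ^ d + i.val, by
    have hi := i.isLt
    have h2 : 2 ^ (d + 1) = 2 ^ d + 2 ^ d := by rw [pow_succ]; ring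
    omega⟩

/-- Merkle root of a family of `2^d` leaves, with leaf hash `h` and node combiner `H`. -/
def mroot (h : α → β) (H : β → β → β) : (d : ℕ) → (Fin (2 ^ d) → α) → β
  | 0, ℓ => h (ℓ ⟨0, by positivity⟩)
  | d + 1, ℓ => H (mroot h H d (half0 ℓ)) (mroot h H d (half1 ℓ))

/-- The `2^k`-block of leaves with block index `b`: leaves `b·2^k, …, b·2^k + 2^k - 1`. -/
def blockAt {d : ℕ} (ℓ : Fin (2 ^ d) → α) (k b : ℕ) (hb : (b + 1) * 2 ^ k ≤ 2 ^ d) :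
    Fin (2 ^ k) → α :=
  fun j => ℓ ⟨b * 2 ^ k + j.val, by
    have hj := j.isLt
    have h1 : (b + 1) * 2 ^ k = b * 2 ^ k + 2 ^ k := by ring
    omega⟩

/-- Index of the sibling block of block `b` (flip the lowest bit). -/
def sibIndex (b : ℕ) : ℕ := if b % 2 = 0 then b + 1 else b - 1

/-- Canonical sibling-path proof for position `i`: the `k`-th entry is the Merkle root of
the `2^k`-block of leaves that is the sibling, at height `k`, of the block containing `i`. -/
def sibPath (h : α → β) (H : β → β → β) {d : ℕ} (ℓ : Fin (2 ^ d) → α) (i : Fin (2 ^ d)) :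
    Fin d → β :=
  fun k => mroot h H k.val (blockAt ℓ k.val (sibIndex (i.val / 2 ^ k.val)) (by
    have hk := k.isLt
    have hi := i.isLt
    have hd : 2 ^ d = 2 ^ (d - k.val) * 2 ^ k.val := by rw [← pow_add]; congr 1; omega
    have hq : i.val / 2 ^ k.val < 2 ^ (d - k.val) :=
      Nat.div_lt_of_lt_mul (by rw [mul_comm, ← hd]; exact hi)
    have hpow : 2 ≤ 2 ^ (d - k.val) := by
      calc 2 = 2 ^ 1 := (pow_one 2).symm
      _ ≤ 2 ^ (d - k.val) := Nat.pow_le_pow_right (by norm_num) (by omega)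
    have heven : 2 ^ (d - k.val) % 2 = 0 := by
      have : 2 ^ (d - k.val) = 2 * 2 ^ (d - k.val - 1) := by
        rw [← pow_succ']; congr 1; omega
      omega
    have hs : sibIndex (i.val / 2 ^ k.val) < 2 ^ (d - k.val) := by
      unfold sibIndex
      split <;> omega
    calc (sibIndex (i.val / 2 ^ k.val) + 1) * 2 ^ k.val
        ≤ 2 ^ (d - k.val) * 2 ^ k.val := Nat.mul_le_mul_right _ (by omega)
      _ = 2 ^ d := hd.symm))

/-! Induction on the height `k`. The `2^(k+1)`-block containing `i` has index `q / 2`, where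
`q = i / 2^k` is the index of the `2^k`-block containing `i`; its two halves are the blocks
`q` and `sibIndex q`, and bit `k` of `i` (the parity of `q`) says which of them is the left one,
exactly as the verification fold decides the order of `H`. -/

section Blocks

variable {d : ℕ} (ℓ : Fin (2 ^ d) → α)

theorem blockAt_congr {k b b' : ℕ} (hb : (b + 1) * 2 ^ k ≤ 2 ^ d)
    (hb' : (b' + 1) * 2 ^ k ≤ 2 ^ d) (e : b = b') :
    blockAt ℓ k b hb = blockAt ℓ k b' hb' := by
  subst e
  rfl

theorem half0_blockAt {k b : ℕ} (hb : (b + 1) * 2 ^ (k + 1) ≤ 2 ^ d)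
    (hb' : (2 * b + 1) * 2 ^ k ≤ 2 ^ d) :
    half0 (blockAt ℓ (k + 1) b hb) = blockAt ℓ k (2 * b) hb' := by
  funext j
  simp only [half0, blockAt, pow_succ]
  congr 2
  ring

theorem half1_blockAt {k b : ℕ} (hb : (b + 1) * 2 ^ (k + 1) ≤ 2 ^ d)
    (hb' : (2 * b + 1 + 1) * 2 ^ k ≤ 2 ^ d) :
    half1 (blockAt ℓ (k + 1) b hb) = blockAt ℓ k (2 * b + 1) hb' := by
  funext j
  simp only [half1, blockAt, pow_succ]
  congr 2
  ring

variable (h : α → β) (H : β → β → β)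

theorem mroot_blockAt_succ {k b : ℕ} (hb : (b + 1) * 2 ^ (k + 1) ≤ 2 ^ d)
    (hb₀ : (2 * b + 1) * 2 ^ k ≤ 2 ^ d) (hb₁ : (2 * b + 1 + 1) * 2 ^ k ≤ 2 ^ d) :
    mroot h H (k + 1) (blockAt ℓ (k + 1) b hb) =
      H (mroot h H k (blockAt ℓ k (2 * b) hb₀))
        (mroot h H k (blockAt ℓ k (2 * b + 1) hb₁)) := by
  rw [mroot, half0_blockAt ℓ hb hb₀, half1_blockAt ℓ hb hb₁]

theorem mroot_blockAt_div_two {k q p : ℕ} (hqp : q / 2 = p)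
    (hp : (p + 1) * 2 ^ (k + 1) ≤ 2 ^ d) (hq : (q + 1) * 2 ^ k ≤ 2 ^ d)
    (hs : (sibIndex q + 1) * 2 ^ k ≤ 2 ^ d) :
    mroot h H (k + 1) (blockAt ℓ (k + 1) p hp) =
      if q.testBit 0 then
        H (mroot h H k (blockAt ℓ k (sibIndex q) hs)) (mroot h H k (blockAt ℓ k q hq))
      else
        H (mroot h H k (blockAt ℓ k q hq)) (mroot h H k (blockAt ℓ k (sibIndex q) hs)) := by
  have hp₁ : (2 * p + 1 + 1) * 2 ^ k ≤ 2 ^ d := by rw [pow_succ] at hp; linarith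
  have hp₀ : (2 * p + 1) * 2 ^ k ≤ 2 ^ d := le_trans (Nat.mul_le_mul_right _ (by omega)) hp₁
  rw [mroot_blockAt_succ ℓ h H hp hp₀ hp₁, Nat.testBit_zero]
  rcases Nat.mod_two_eq_zero_or_one q with hq2 | hq2
  · have hsib : sibIndex q = 2 * p + 1 := by rw [sibIndex, if_pos hq2]; omega
    simp only [hq2, zero_ne_one, decide_false, Bool.false_eq_true, if_false]
    rw [blockAt_congr ℓ hq hp₀ (by omega), blockAt_congr ℓ hs hp₁ hsib]
  · have hsib : sibIndex q = 2 * p := by rw [sibIndex, if_neg (by omega)]; omega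
    simp only [hq2, decide_true, if_true]
    rw [blockAt_congr ℓ hq hp₁ (by omega), blockAt_congr ℓ hs hp₀ hsib]

end Blocks

/-- Structural invariant of the honest prover's strategy: for all `k ≤ d`, the
verification fold of the canonical sibling-path proof for leaf `i`, with element `ℓ i`,
computed for `k` steps equals the Merkle root of the `2^k`-block of leaves containing
`i`, i.e. the leaves with indices `⌊i/2^k⌋·2^k, …, ⌊i/2^k⌋·2^k + 2^k - 1`. -/
theorem vfold_sibPath_eq_block_root (h : α → β) (H : β → β → β)
    {d : ℕ} (ℓ : Fin (2 ^ d) → α) (i : Fin (2 ^ d)) (k : ℕ) (hk : k ≤ d) :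
    vfold h H (ℓ i) i.val (sibPath h H ℓ i) k =
      mroot h H k (blockAt ℓ k (i.val / 2 ^ k) (by
        have hi := i.isLt
        have hd : 2 ^ d = 2 ^ (d - k) * 2 ^ k := by rw [← pow_add]; congr 1; omega
        have hq : i.val / 2 ^ k < 2 ^ (d - k) :=
          Nat.div_lt_of_lt_mul (by rw [mul_comm, ← hd]; exact hi)
        calc (i.val / 2 ^ k + 1) * 2 ^ k ≤ 2 ^ (d - k) * 2 ^ k :=
              Nat.mul_le_mul_right _ (by omega)
          _ = 2 ^ d := hd.symm)) := by
  induction k with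
  | zero =>
    simp only [vfold, mroot, blockAt, pow_zero, Nat.div_one, mul_one, add_zero]
  | succ k ih =>
    have hbit : i.val.testBit k = (i.val / 2 ^ k).testBit 0 := by
      rw [Nat.testBit_div_two_pow, zero_add]
    have hdiv : i.val / 2 ^ k / 2 = i.val / 2 ^ (k + 1) := by
      rw [Nat.div_div_eq_div_mul, pow_succ]
    rw [vfold, dif_pos (by omega), ih (by omega), hbit]
    exact (mroot_blockAt_div_two ℓ h H hdiv _ _ _).symm
end

section
/- Assume the leaf-hash h : α → β is injective and the node combiner H : β → β → β is injective as a function on pairs. Let validTr : α → Prop, let ℓ : Fin (2^d) → α be a batch that is globally valid with respect to a history of previous batches ℓ₁, …, ℓₘ (with ℓₖ : Fin (2^{dₖ}) → α): every element of ℓ satisfies validTr, ℓ is injective, and no element of ℓ occurs in any history batch. Then no fraud evidence against ℓ with root mroot d ℓ exists: (1) every membership proof that verifies some element e at a position i against mroot d ℓ satisfies e = ℓ i, hence validTr e holds; (2) there is no element e, pair of distinct positions i ≠ j, and pair of proofs verifying e at both i and j against mroot d ℓ; and (3) there is no element e with verifying membership proofs both against mroot d ℓ and against mroot dₖ ℓₖ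 for some history batch ℓₖ. (The honest staker's side of Proposition 3: an honest agent staking on a legal batch tag wins every Validity, Integrity 1, and Integrity 2 fraud-proof initiated against it.) -/
/-!
Under injective hashing the Merkle root binds every leaf. By induction on the depth: the last
step of a verifying fold is `H` applied to the fold at depth `d` and one proof hash, so injectivity
of `H` forces the fold at depth `d` to equal the root of the half selected by bit `d` of the
position; that fold is the fold of the truncated proof at the position modulo `2 ^ d`, and at
depth `0` injectivity of `h` gives `e = ℓ i`. So every verified element is the batch element at
its position, and the three claims reduce to validity, injectivity and freshness of the batch.
-/

variable {α β : Type*}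

theorem half_testBit_apply_mod_two_pow {d : ℕ} (ℓ : Fin (2 ^ (d + 1)) → α)
    (i : Fin (2 ^ (d + 1))) :
    (if i.val.testBit d then half1 ℓ else half0 ℓ) ⟨i % 2 ^ d, Nat.mod_lt _ (by positivity)⟩
      = ℓ i := by
  have hquot : i.val / 2 ^ d < 2 := Nat.div_lt_of_lt_mul (by rw [← pow_succ]; exact i.isLt)
  have hdecomp := Nat.div_add_mod i.val (2 ^ d)
  rw [Nat.testBit_eq_decide_div_mod_eq]
  obtain hq | hq := Nat.le_one_iff_eq_zero_or_eq_one.mp (Nat.lt_succ_iff.mp hquot)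
  · rw [hq, mul_zero, zero_add] at hdecomp
    simp only [hq, Nat.zero_mod]
    exact congrArg ℓ (Fin.ext hdecomp)
  · rw [hq, mul_one] at hdecomp
    simp only [hq, Nat.one_mod]
    exact congrArg ℓ (Fin.ext hdecomp)

section MerkleProof

variable {h : α → β} {H : β → β → β}

theorem vfold_mod_two_pow_init (e : α) (i : ℕ) {d : ℕ} (π : Fin (d + 1) → β) {k : ℕ}
    (hk : k ≤ d) : vfold h H e (i % 2 ^ d) (Fin.init π) k = vfold h H e i π k := by
  induction k with
  | zero => rfl
  | succ k ih =>
    have hkd : k < d := hk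
    have hbit : (i % 2 ^ d).testBit k = i.testBit k := by
      simp [Nat.testBit_mod_two_pow, hkd]
    simp only [vfold, dif_pos hkd, dif_pos (hkd.trans d.lt_succ_self), hbit, ih hkd.le]
    rfl

theorem vfold_succ_self (e : α) (i : ℕ) {d : ℕ} (π : Fin (d + 1) → β) :
    vfold h H e i π (d + 1) =
      if i.testBit d then H (π (Fin.last d)) (vfold h H e (i % 2 ^ d) (Fin.init π) d)
      else H (vfold h H e (i % 2 ^ d) (Fin.init π) d) (π (Fin.last d)) := by
  rw [vfold, dif_pos d.lt_succ_self, vfold_mod_two_pow_init e i π le_rfl]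
  rfl

theorem eq_of_verifies_mroot (hinj : Function.Injective h)
    (Hinj : Function.Injective fun p : β × β => H p.1 p.2) :
    ∀ {d : ℕ} (ℓ : Fin (2 ^ d) → α) {e : α} {i : Fin (2 ^ d)} {π : Fin d → β},
      Verifies h H π e i (mroot h H d ℓ) → e = ℓ i
  | 0, ℓ, e, i, π, hv => by
    obtain rfl : i = ⟨0, Nat.one_pos⟩ := Fin.ext (Nat.lt_one_iff.mp i.isLt)
    exact hinj hv
  | d + 1, ℓ, e, i, π, hv => by
    have hv' : Verifies h H (Fin.init π) e ⟨i % 2 ^ d, Nat.mod_lt _ (by positivity)⟩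
        (mroot h H d (if i.val.testBit d then half1 ℓ else half0 ℓ)) := by
      rw [Verifies, vfold_succ_self, mroot] at hv
      have H_inj {a b a' b' : β} (hH : H a b = H a' b') : a = a' ∧ b = b' :=
        Prod.mk.inj (Hinj (a₁ := (a, b)) (a₂ := (a', b')) hH)
      split_ifs at hv ⊢
      · exact (H_inj hv).2
      · exact (H_inj hv).1
    rw [← half_testBit_apply_mod_two_pow ℓ i]
    exact eq_of_verifies_mroot hinj Hinj _ hv'

end MerkleProof

/-- Honest staker's side of Proposition 3: against a globally valid batch no fraud
evidence exists — every verifying membership proof identifies the (valid) batch element,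
and there are no verified duplicates within the batch nor across the history. -/
theorem honest_staker_wins (h : α → β) (H : β → β → β)
    (hinj : Function.Injective h)
    (Hinj : Function.Injective fun p : β × β => H p.1 p.2)
    (validTr : α → Prop) {d : ℕ} (ℓ : Fin (2 ^ d) → α)
    (m : ℕ) (dk : Fin m → ℕ) (hist : (k : Fin m) → Fin (2 ^ dk k) → α)
    (hvalid : ∀ i, validTr (ℓ i)) (hinjℓ : Function.Injective ℓ)
    (hfresh : ∀ (i : Fin (2 ^ d)) (k : Fin m) (j : Fin (2 ^ dk k)), ℓ i ≠ hist k j) :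
    (∀ (e : α) (i : Fin (2 ^ d)) (π : Fin d → β),
        Verifies h H π e i (mroot h H d ℓ) → e = ℓ i ∧ validTr e) ∧
    (¬ ∃ (e : α) (i j : Fin (2 ^ d)) (π π' : Fin d → β), i ≠ j ∧
        Verifies h H π e i (mroot h H d ℓ) ∧
        Verifies h H π' e j (mroot h H d ℓ)) ∧
    (¬ ∃ (e : α) (k : Fin m) (i : Fin (2 ^ d)) (j : Fin (2 ^ dk k))
        (π : Fin d → β) (π' : Fin (dk k) → β),
        Verifies h H π e i (mroot h H d ℓ) ∧
        Verifies h H π' e j (mroot h H (dk k) (hist k))) := by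
  refine ⟨fun e i π hv => ?_, ?_, ?_⟩
  · obtain rfl := eq_of_verifies_mroot hinj Hinj ℓ hv
    exact ⟨rfl, hvalid i⟩
  · rintro ⟨e, i, j, π, π', hij, hvi, hvj⟩
    obtain rfl := eq_of_verifies_mroot hinj Hinj ℓ hvi
    exact hij (hinjℓ (eq_of_verifies_mroot hinj Hinj ℓ hvj))
  · rintro ⟨e, k, i, j, π, π', hv, hv'⟩
    obtain rfl := eq_of_verifies_mroot hinj Hinj ℓ hv
    exact hfresh i k j (eq_of_verifies_mroot hinj Hinj (hist k) hv')
end
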